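/- arXiv:1805.08611 — 3 statements merged into one kernel-verified Lean document; each statement's English description precedes it below -/
import Mathlib

section
/- With the same setup (orthogonal complex structure J on inner product space V, subspace W, D = W ∩ J(W), D⊥ the orthogonal complement of D in W, decomposition JZ = φZ + ωZ for Z ∈ W): φ maps D⊥ into D⊥, i.e., for all Z ∈ D⊥ (Z ∈ W with Z ⊥ D), the component φZ = P_W(JZ) is orthogonal to D. -/
open scoped RealInnerProductSpace

theorem Submodule.apply_mem_inf_map_self {R M : Type*} [Ring R] [AddCommGroup M] [Module R M]
    {f : M →ₗ[R] M} (hf : ∀ x, f (f x) = -x) {W : Submodule R M} {d : M}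
    (hd : d ∈ W ⊓ W.map f) : f d ∈ W ⊓ W.map f := by
  obtain ⟨hdW, w, hwW, rfl⟩ := hd
  refine ⟨?_, f w, hdW, rfl⟩
  rw [SetLike.mem_coe, hf]
  exact W.neg_mem hwW

theorem real_inner_apply_left_eq_neg_inner_apply_right {V : Type*} [NormedAddCommGroup V]
    [InnerProductSpace ℝ V] {J : V →ₗ[ℝ] V} (hJ2 : ∀ x, J (J x) = -x)
    (hJi : ∀ x y, ⟪J x, J y⟫ = ⟪x, y⟫) (x y : V) : ⟪J x, y⟫ = -⟪x, J y⟫ := by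
  rw [← hJi (J x) y, hJ2, inner_neg_left]

theorem stmt_2_general {V : Type*} [NormedAddCommGroup V] [InnerProductSpace ℝ V]
    [FiniteDimensional ℝ V] (J : V →ₗ[ℝ] V)
    (hJ2 : ∀ x : V, J (J x) = -x)
    (hJi : ∀ x y : V, ⟪J x, J y⟫ = ⟪x, y⟫)
    (W : Submodule ℝ V) (Z : V)
    (hZD : ∀ d ∈ W ⊓ W.map J, ⟪Z, d⟫ = 0) :
    ∀ d ∈ W ⊓ W.map J, ⟪((W.orthogonalProjection (J Z) : W) : V), d⟫ = 0 := by
  intro d hd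
  calc _ = ⟪J Z, d⟫ := W.inner_orthogonalProjectionOnto_eq_of_mem_right ⟨d, hd.1⟩ (J Z)
    _ = -⟪Z, J d⟫ := real_inner_apply_left_eq_neg_inner_apply_right hJ2 hJi Z d
    _ = 0 := by rw [hZD _ (Submodule.apply_mem_inf_map_self hJ2 hd), neg_zero]

/-- `φ = P_W ∘ J` maps `D⊥` (the orthogonal complement of
`D = W ⊓ J(W)` inside `W`) into `D⊥`: if `Z ∈ W` is orthogonal to `D`, then
`φZ = P_W (JZ)` is orthogonal to `D`. -/
theorem stmt_2 {V : Type*} [NormedAddCommGroup V] [InnerProductSpace ℝ V]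
    [FiniteDimensional ℝ V] (J : V →ₗ[ℝ] V)
    (hJ2 : ∀ x : V, J (J x) = -x)
    (hJi : ∀ x y : V, ⟪J x, J y⟫ = ⟪x, y⟫)
    (W : Submodule ℝ V) (Z : V) (hZW : Z ∈ W)
    (hZD : ∀ d ∈ W ⊓ W.map J, ⟪Z, d⟫ = 0) :
    ∀ d ∈ W ⊓ W.map J, ⟪((W.orthogonalProjection (J Z) : W) : V), d⟫ = 0 :=
  stmt_2_general J hJ2 hJi W Z hZD
end

section
/- Let μ be the orthogonal complement of ω(D⊥) inside W⊥, where D⊥ is the orthogonal complement of D = W ∩ J(W) inside W and ωZ = P_{W⊥}(JZ). Then μ is J-invariant: J(μ) ⊆ μ. -/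
/-!
For `x ∈ μ` we have `x ⊥ W` and, since the projection onto `W⊥` is self-adjoint, `x ⊥ J Z` for
every `Z ∈ D⊥`. The map `J` is skew-adjoint (`⟪x, J y⟫ = -⟪J x, y⟫`) and maps `D` into `W`, so
splitting `w ∈ W` along `D ⊕ D⊥` gives `J x ⊥ W`. Finally `⟪P_{W⊥}(J Z), J x⟫ = ⟪J Z, J x⟫ = ⟪Z, x⟫ = 0`
for `Z ∈ W`, so `J x` is also orthogonal to `ω(D⊥)`.
-/

open scoped RealInnerProductSpace

namespace Submodule

variable {𝕜 V : Type*} [RCLike 𝕜] [NormedAddCommGroup V] [InnerProductSpace 𝕜 V]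

theorem mem_orthogonal_span_iff {s : Set V} {x : V} :
    x ∈ (span 𝕜 s)ᗮ ↔ ∀ u ∈ s, inner 𝕜 u x = 0 := by
  rw [← span_singleton_le_iff_mem, ← isOrtho_iff_le, isOrtho_comm, isOrtho_span]
  simp

theorem inner_orthogonalProjectionOnto_eq_of_mem {K : Submodule 𝕜 V} [K.HasOrthogonalProjection]
    {x : V} (hx : x ∈ K) (v : V) : inner 𝕜 (K.orthogonalProjectionOnto v : V) x = inner 𝕜 v x :=
  (K.coe_inner _ ⟨x, hx⟩).symm.trans (inner_orthogonalProjectionOnto_eq_of_mem_right ⟨x, hx⟩ v)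

end Submodule

open Submodule

section ComplexStructure

variable {V : Type*} [NormedAddCommGroup V] [InnerProductSpace ℝ V] {J : V →ₗ[ℝ] V}

theorem inner_apply_right_eq_neg (hJ2 : ∀ x, J (J x) = -x) (hJi : ∀ x y, ⟪J x, J y⟫ = ⟪x, y⟫)
    (x y : V) : ⟪x, J y⟫ = -⟪J x, y⟫ := by
  rw [← hJi x (J y), hJ2, inner_neg_right]

theorem apply_mem_of_mem_inf_map (hJ2 : ∀ x, J (J x) = -x) {W : Submodule ℝ V} {d : V}
    (hd : d ∈ W ⊓ W.map J) : J d ∈ W := by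
  obtain ⟨-, w, hw, rfl⟩ := hd
  rw [hJ2]
  exact W.neg_mem hw

theorem apply_mem_orthogonal_of_forall_inner_eq_zero (hJ2 : ∀ x, J (J x) = -x)
    (hJi : ∀ x y, ⟪J x, J y⟫ = ⟪x, y⟫) {W : Submodule ℝ V} [(W ⊓ W.map J).HasOrthogonalProjection]
    {x : V} (hx : x ∈ Wᗮ)
    (hJZ : ∀ Z ∈ W, (∀ d ∈ W ⊓ W.map J, ⟪Z, d⟫ = 0) → ⟪J Z, x⟫ = 0) : J x ∈ Wᗮ := by
  rw [mem_orthogonal]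
  intro w hw
  set D := W ⊓ W.map J
  set d := D.starProjection w
  have hdD : d ∈ D := D.starProjection_apply_mem w
  have hJd : ⟪J d, x⟫ = 0 := inner_right_of_mem_orthogonal (apply_mem_of_mem_inf_map hJ2 hdD) hx
  have hJz : ⟪J (w - d), x⟫ = 0 :=
    hJZ _ (W.sub_mem hw hdD.1) fun u hu ↦ D.starProjection_inner_eq_zero w u hu
  calc ⟪w, J x⟫ = ⟪d, J x⟫ + ⟪w - d, J x⟫ := by rw [← inner_add_left, add_sub_cancel]
    _ = 0 := by rw [inner_apply_right_eq_neg hJ2 hJi, inner_apply_right_eq_neg hJ2 hJi, hJd, hJz]; simp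

end ComplexStructure

/-- Let `μ` be the orthogonal complement of `ω(D⊥)` inside `W⊥`,
where `D⊥` is the orthogonal complement of `D = W ⊓ J(W)` inside `W` and
`ωZ = P_{W⊥}(JZ)`.  Then `μ` is `J`-invariant: `J(μ) ⊆ μ`. -/
theorem stmt_8 {V : Type*} [NormedAddCommGroup V] [InnerProductSpace ℝ V]
    [FiniteDimensional ℝ V] (J : V →ₗ[ℝ] V)
    (hJ2 : ∀ x : V, J (J x) = -x)
    (hJi : ∀ x y : V, ⟪J x, J y⟫ = ⟪x, y⟫)
    (W : Submodule ℝ V) (μ : Submodule ℝ V)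
    (hμ : μ = Wᗮ ⊓ (Submodule.span ℝ
      {v : V | ∃ Z ∈ W, (∀ d ∈ W ⊓ W.map J, ⟪Z, d⟫ = 0) ∧
        v = ((Submodule.orthogonalProjectionOnto Wᗮ (J Z) : Wᗮ) : V)})ᗮ) :
    μ.map J ≤ μ := by
  subst hμ
  rintro _ ⟨x, ⟨hxW, hxω⟩, rfl⟩
  rw [SetLike.mem_coe, mem_orthogonal_span_iff] at hxω
  have hJZx : ∀ Z ∈ W, (∀ d ∈ W ⊓ W.map J, ⟪Z, d⟫ = 0) → ⟪J Z, x⟫ = 0 := fun Z hZ hZD ↦ by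
    rw [← inner_orthogonalProjectionOnto_eq_of_mem hxW]
    exact hxω _ ⟨Z, hZ, hZD, rfl⟩
  have hJx : J x ∈ Wᗮ := apply_mem_orthogonal_of_forall_inner_eq_zero hJ2 hJi hxW hJZx
  refine ⟨hJx, mem_orthogonal_span_iff.2 ?_⟩
  rintro _ ⟨Z, hZ, -, rfl⟩
  rw [inner_orthogonalProjectionOnto_eq_of_mem hJx, hJi]
  exact inner_right_of_mem_orthogonal hZ hxW
end

section
/- For the map φ(u₁,…,u₈) = (e^{u₁} sin u₃, e^{u₁} cos u₃) from ℝ⁸ to ℝ² and the almost complex structure J on ℝ⁸ given by J e₁ = (−e₃−e₂)/√2, J e₂ = (−e₄+e₁)/√2, J e₃ = (e₁+e₄)/√2, J e₄ = (e₂−e₃)/√2, J e₅ = (−e₇−e₆)/√2, J e₆ = (−e₈+e₅)/√2, J e₇ = (e₅+e₈)/√2, J e₈ = (e₆−e₇)/√2: at every point the subspace D := ker dφ ∩ J(ker dφ) equals span{e₅, e₆, e₇, e₈}, which is 4-dimensional and J-invariant. -/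
/-!
Indexing coordinates from 0: at every point `p`,
`dφ_p v = e^{p₀} (sin p₂ · v₀ + cos p₂ · v₂, cos p₂ · v₀ - sin p₂ · v₂)` is a nonzero multiple of
a rotation applied to `(v₀, v₂)`, so `ker dφ_p = {v₀ = v₂ = 0}` for every `p`.
The structure `J` satisfies `J² = -1` and preserves `V = span{e₄, e₅, e₆, e₇}`, hence `J V = V`;
as `V ⊆ ker dφ_p`, this gives `V ⊆ D_p`. Conversely, if `w` and `J w` both lie in `ker dφ_p`, then
`(J w)₀ = (w₁ + w₂)/√2` and `(J w)₂ = -(w₀ + w₃)/√2` force `w₁ = w₃ = 0`, so `w ∈ V` and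
`J w ∈ J V = V`.
-/

open Submodule Module

theorem Module.Basis.finrank_span_image {ι R M : Type*} [Ring R] [StrongRankCondition R]
    [AddCommGroup M] [Module R M] (b : Basis ι R M) (s : Set ι) [Finite s] :
    finrank R (span R (b '' s)) = s.ncard := by
  have := nontrivial_of_invariantBasisNumber R
  have : Fintype (b '' s) := (s.toFinite.image b).fintype
  rw [finrank_span_set_eq_card ((b.linearIndepOn s).id_image), Set.toFinset_card,
    Fintype.card_eq_nat_card, Nat.card_coe_set_eq, Set.ncard_image_of_injective s b.injective]

theorem Submodule.map_eq_self_of_comp_self_eq_neg {R M : Type*} [Ring R] [AddCommGroup M]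
    [Module R M] {J : M →ₗ[R] M} (hJ : J ∘ₗ J = -LinearMap.id) {V : Submodule R M}
    (hV : V.map J ≤ V) : V.map J = V := by
  refine le_antisymm hV fun v hv => ⟨-J v, V.neg_mem (hV ⟨v, hv, rfl⟩), ?_⟩
  rw [map_neg, ← LinearMap.comp_apply, hJ]
  simp

theorem EuclideanSpace.mem_span_basisFun_image_iff {ι 𝕜 : Type*} [Fintype ι] [RCLike 𝕜]
    {s : Set ι} {v : EuclideanSpace 𝕜 ι} :
    v ∈ span 𝕜 (EuclideanSpace.basisFun ι 𝕜 '' s) ↔ ∀ i ∉ s, v i = 0 := by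
  rw [← OrthonormalBasis.coe_toBasis, Basis.mem_span_image, Finsupp.support_subset_iff]
  simp

theorem EuclideanSpace.fderiv_apply {𝕜 ι H : Type*} [RCLike 𝕜] [Fintype ι] [NormedAddCommGroup H]
    [NormedSpace 𝕜 H] {f : H → EuclideanSpace 𝕜 ι} {y : H} (hf : DifferentiableAt 𝕜 f y) (i : ι)
    (v : H) : fderiv 𝕜 f y v i = fderiv 𝕜 (fun x => f x i) y v := by
  have hproj := PiLp.hasFDerivAt_apply (𝕜 := 𝕜) 2 (f y) i
  exact congrArg (· v) (hproj.comp y hf.hasFDerivAt).fderiv.symm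

theorem Real.sin_mul_add_cos_mul_eq_zero_and_iff (θ x y : ℝ) :
    sin θ * x + cos θ * y = 0 ∧ cos θ * x - sin θ * y = 0 ↔ x = 0 ∧ y = 0 := by
  refine ⟨fun ⟨h₁, h₂⟩ => ⟨?_, ?_⟩, by rintro ⟨rfl, rfl⟩; simp⟩
  · linear_combination sin θ * h₁ + cos θ * h₂ - x * sin_sq_add_cos_sq θ
  · linear_combination cos θ * h₁ - sin θ * h₂ - y * sin_sq_add_cos_sq θ

theorem mem_ker_fderiv_of_eq_exp_mul_sin_cos_iff {ι : Type*} [Fintype ι] {i j : ι}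
    {φ : EuclideanSpace ℝ ι → EuclideanSpace ℝ (Fin 2)}
    (hφ : ∀ q, φ q = !₂[Real.exp (q i) * Real.sin (q j), Real.exp (q i) * Real.cos (q j)])
    (p v : EuclideanSpace ℝ ι) :
    v ∈ LinearMap.ker (fderiv ℝ φ p : EuclideanSpace ℝ ι →ₗ[ℝ] EuclideanSpace ℝ (Fin 2)) ↔
      v i = 0 ∧ v j = 0 := by
  obtain rfl := funext hφ
  have hi := PiLp.hasFDerivAt_apply (𝕜 := ℝ) 2 p i
  have hj := PiLp.hasFDerivAt_apply (𝕜 := ℝ) 2 p j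
  have hd : DifferentiableAt ℝ (fun q : EuclideanSpace ℝ ι =>
      !₂[Real.exp (q i) * Real.sin (q j), Real.exp (q i) * Real.cos (q j)]) p := by
    rw [differentiableAt_piLp]
    intro k
    fin_cases k <;> simp <;> fun_prop
  rw [LinearMap.mem_ker, ContinuousLinearMap.coe_coe, WithLp.ext_iff, funext_iff,
    Fin.forall_fin_two, EuclideanSpace.fderiv_apply hd, EuclideanSpace.fderiv_apply hd,
    ← Real.sin_mul_add_cos_mul_eq_zero_and_iff (p j)]
  simp only [Matrix.cons_val_zero, Matrix.cons_val_one, PiLp.zero_apply,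
    (hi.exp.fun_mul hj.sin).fderiv, (hi.exp.fun_mul hj.cos).fderiv]
  simp only [add_apply, smul_apply, PiLp.proj_apply, smul_eq_mul, neg_mul,
    mul_left_comm _ (Real.exp (p i)), ← mul_neg, ← mul_add, mul_eq_zero, Real.exp_ne_zero, false_or]
  constructor <;> rintro ⟨h₁, h₂⟩ <;> constructor <;> linarith

noncomputable def almostComplexJ : EuclideanSpace ℝ (Fin 8) →ₗ[ℝ] EuclideanSpace ℝ (Fin 8) where
  toFun w := (√2)⁻¹ • !₂[w 1 + w 2, w 3 - w 0, -w 0 - w 3, w 2 - w 1,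
    w 5 + w 6, w 7 - w 4, -w 4 - w 7, w 6 - w 5]
  map_add' v w := by ext k; fin_cases k <;> simp <;> ring
  map_smul' c w := by ext k; fin_cases k <;> simp <;> ring

theorem eq_almostComplexJ (J : EuclideanSpace ℝ (Fin 8) →ₗ[ℝ] EuclideanSpace ℝ (Fin 8))
    (h1 : J (EuclideanSpace.single 0 1) = (Real.sqrt 2)⁻¹ •
      (-(EuclideanSpace.single 2 1) - EuclideanSpace.single 1 (1:ℝ)))
    (h2 : J (EuclideanSpace.single 1 1) = (Real.sqrt 2)⁻¹ •
      (-(EuclideanSpace.single 3 1) + EuclideanSpace.single 0 (1:ℝ)))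
    (h3 : J (EuclideanSpace.single 2 1) = (Real.sqrt 2)⁻¹ •
      (EuclideanSpace.single 0 1 + EuclideanSpace.single 3 (1:ℝ)))
    (h4 : J (EuclideanSpace.single 3 1) = (Real.sqrt 2)⁻¹ •
      (EuclideanSpace.single 1 1 - EuclideanSpace.single 2 (1:ℝ)))
    (h5 : J (EuclideanSpace.single 4 1) = (Real.sqrt 2)⁻¹ •
      (-(EuclideanSpace.single 6 1) - EuclideanSpace.single 5 (1:ℝ)))
    (h6 : J (EuclideanSpace.single 5 1) = (Real.sqrt 2)⁻¹ •
      (-(EuclideanSpace.single 7 1) + EuclideanSpace.single 4 (1:ℝ)))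
    (h7 : J (EuclideanSpace.single 6 1) = (Real.sqrt 2)⁻¹ •
      (EuclideanSpace.single 4 1 + EuclideanSpace.single 7 (1:ℝ)))
    (h8 : J (EuclideanSpace.single 7 1) = (Real.sqrt 2)⁻¹ •
      (EuclideanSpace.single 5 1 - EuclideanSpace.single 6 (1:ℝ))) :
    J = almostComplexJ := by
  refine (EuclideanSpace.basisFun (Fin 8) ℝ).toBasis.ext fun i => ?_
  ext k
  fin_cases i <;> fin_cases k <;> simp [almostComplexJ, h1, h2, h3, h4, h5, h6, h7, h8]

theorem almostComplexJ_comp_self : almostComplexJ ∘ₗ almostComplexJ = -LinearMap.id := by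
  ext w k
  fin_cases k <;> simp [almostComplexJ] <;> ring_nf <;> simp [inv_pow] <;> ring

noncomputable def tailSpan : Submodule ℝ (EuclideanSpace ℝ (Fin 8)) :=
  span ℝ (EuclideanSpace.basisFun (Fin 8) ℝ '' {4, 5, 6, 7})

theorem mem_tailSpan_iff {v : EuclideanSpace ℝ (Fin 8)} :
    v ∈ tailSpan ↔ v 0 = 0 ∧ v 1 = 0 ∧ v 2 = 0 ∧ v 3 = 0 := by
  rw [tailSpan, EuclideanSpace.mem_span_basisFun_image_iff]
  simp [Fin.forall_fin_succ]

theorem finrank_tailSpan : finrank ℝ tailSpan = 4 := by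
  rw [tailSpan, ← OrthonormalBasis.coe_toBasis, Basis.finrank_span_image,
    Set.ncard_eq_toFinset_card']
  rfl

theorem map_almostComplexJ_tailSpan : tailSpan.map almostComplexJ = tailSpan := by
  refine map_eq_self_of_comp_self_eq_neg almostComplexJ_comp_self (map_le_iff_le_comap.2 ?_)
  intro v hv
  rw [mem_comap, mem_tailSpan_iff] at *
  simp [almostComplexJ, hv]

theorem inf_map_almostComplexJ_eq_tailSpan (K : Submodule ℝ (EuclideanSpace ℝ (Fin 8)))
    (hK : ∀ v, v ∈ K ↔ v 0 = 0 ∧ v 2 = 0) : K ⊓ K.map almostComplexJ = tailSpan := by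
  have hVK : tailSpan ≤ K := fun v hv => by
    rw [mem_tailSpan_iff] at hv
    exact (hK v).2 ⟨hv.1, hv.2.2.1⟩
  refine le_antisymm ?_ (le_inf hVK (map_almostComplexJ_tailSpan ▸ map_mono hVK))
  rintro _ ⟨hJw, w, hw, rfl⟩
  rw [SetLike.mem_coe, hK] at hw hJw
  obtain ⟨hw0, hw2⟩ := hw
  obtain ⟨hw1, hw3⟩ : w 1 = 0 ∧ w 3 = 0 := by simpa [almostComplexJ, hw0, hw2] using hJw
  simp [almostComplexJ, mem_tailSpan_iff, hw0, hw1, hw2, hw3]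

/-- For the map `φ(u) = (e^{u₁} sin u₃, e^{u₁} cos u₃)` and the
almost complex structure `J` on `ℝ⁸` given on the standard basis (0-indexed)
by the stated formulas, at every point the subspace
`D = ker dφ ⊓ J(ker dφ)` equals `span{e₅, e₆, e₇, e₈}`, is 4-dimensional and
`J`-invariant. -/
theorem stmt_11 (φ : EuclideanSpace ℝ (Fin 8) → EuclideanSpace ℝ (Fin 2))
    (hφ : ∀ p, φ p = (WithLp.equiv 2 (Fin 2 → ℝ)).symm
      ![Real.exp (p 0) * Real.sin (p 2), Real.exp (p 0) * Real.cos (p 2)])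
    (J : EuclideanSpace ℝ (Fin 8) →ₗ[ℝ] EuclideanSpace ℝ (Fin 8))
    (h1 : J (EuclideanSpace.single 0 1) = (Real.sqrt 2)⁻¹ •
      (-(EuclideanSpace.single 2 1) - EuclideanSpace.single 1 (1:ℝ)))
    (h2 : J (EuclideanSpace.single 1 1) = (Real.sqrt 2)⁻¹ •
      (-(EuclideanSpace.single 3 1) + EuclideanSpace.single 0 (1:ℝ)))
    (h3 : J (EuclideanSpace.single 2 1) = (Real.sqrt 2)⁻¹ •
      (EuclideanSpace.single 0 1 + EuclideanSpace.single 3 (1:ℝ)))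
    (h4 : J (EuclideanSpace.single 3 1) = (Real.sqrt 2)⁻¹ •
      (EuclideanSpace.single 1 1 - EuclideanSpace.single 2 (1:ℝ)))
    (h5 : J (EuclideanSpace.single 4 1) = (Real.sqrt 2)⁻¹ •
      (-(EuclideanSpace.single 6 1) - EuclideanSpace.single 5 (1:ℝ)))
    (h6 : J (EuclideanSpace.single 5 1) = (Real.sqrt 2)⁻¹ •
      (-(EuclideanSpace.single 7 1) + EuclideanSpace.single 4 (1:ℝ)))
    (h7 : J (EuclideanSpace.single 6 1) = (Real.sqrt 2)⁻¹ •
      (EuclideanSpace.single 4 1 + EuclideanSpace.single 7 (1:ℝ)))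
    (h8 : J (EuclideanSpace.single 7 1) = (Real.sqrt 2)⁻¹ •
      (EuclideanSpace.single 5 1 - EuclideanSpace.single 6 (1:ℝ))) :
    ∀ p : EuclideanSpace ℝ (Fin 8),
      LinearMap.ker (fderiv ℝ φ p : EuclideanSpace ℝ (Fin 8) →ₗ[ℝ] EuclideanSpace ℝ (Fin 2)) ⊓ (LinearMap.ker (fderiv ℝ φ p : EuclideanSpace ℝ (Fin 8) →ₗ[ℝ] EuclideanSpace ℝ (Fin 2))).map J
        = Submodule.span ℝ
          ({EuclideanSpace.single 4 1, EuclideanSpace.single 5 1,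
            EuclideanSpace.single 6 1, EuclideanSpace.single 7 1} :
            Set (EuclideanSpace ℝ (Fin 8))) ∧
      Module.finrank ℝ
        ↥(LinearMap.ker (fderiv ℝ φ p : EuclideanSpace ℝ (Fin 8) →ₗ[ℝ] EuclideanSpace ℝ (Fin 2)) ⊓ (LinearMap.ker (fderiv ℝ φ p : EuclideanSpace ℝ (Fin 8) →ₗ[ℝ] EuclideanSpace ℝ (Fin 2))).map J) = 4 ∧
      (LinearMap.ker (fderiv ℝ φ p : EuclideanSpace ℝ (Fin 8) →ₗ[ℝ] EuclideanSpace ℝ (Fin 2)) ⊓ (LinearMap.ker (fderiv ℝ φ p : EuclideanSpace ℝ (Fin 8) →ₗ[ℝ] EuclideanSpace ℝ (Fin 2))).map J).map J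
        = LinearMap.ker (fderiv ℝ φ p : EuclideanSpace ℝ (Fin 8) →ₗ[ℝ] EuclideanSpace ℝ (Fin 2)) ⊓ (LinearMap.ker (fderiv ℝ φ p : EuclideanSpace ℝ (Fin 8) →ₗ[ℝ] EuclideanSpace ℝ (Fin 2))).map J := by
  intro p
  obtain rfl := eq_almostComplexJ J h1 h2 h3 h4 h5 h6 h7 h8
  rw [inf_map_almostComplexJ_eq_tailSpan _ (mem_ker_fderiv_of_eq_exp_mul_sin_cos_iff hφ p)]
  refine ⟨?_, finrank_tailSpan, map_almostComplexJ_tailSpan⟩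
  simp [tailSpan, Set.image_insert_eq]
end
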